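/- If (f, g, h) solves the system f_x + g_y = 0, f f_x + g f_y = -(1/ρ) h_x + ν f_{yy}, h_y = 0, and ε ∈ ℝ, then for any constant c the triple f̃(x,y) = e^{-ε} f(e^{ε}x, y), g̃(x,y) = g(e^{ε}x, y), h̃(x,y) = e^{-2ε} h(e^{ε}x, y) + c also solves all three equations of the system. -/

import Mathlib

/-- Partial derivative in the first variable. -/
noncomputable def pdx (w : ℝ → ℝ → ℝ) (x y : ℝ) : ℝ := deriv (fun t => w t y) x
/-- Partial derivative in the second variable. -/
noncomputable def pdy (w : ℝ → ℝ → ℝ) (x y : ℝ) : ℝ := deriv (fun t => w x t) y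
/-- Second partial derivative in the second variable. -/
noncomputable def pdyy (w : ℝ → ℝ → ℝ) (x y : ℝ) : ℝ := deriv (fun t => pdy w x t) y

lemma sliceX (w : ℝ → ℝ → ℝ) (hw : ContDiff ℝ (⊤ : ℕ∞) (Function.uncurry w)) (y : ℝ) :
    ContDiff ℝ (⊤ : ℕ∞) (fun t => w t y) := hw.comp (contDiff_id.prodMk contDiff_const)

lemma sliceY (w : ℝ → ℝ → ℝ) (hw : ContDiff ℝ (⊤ : ℕ∞) (Function.uncurry w)) (x : ℝ) :
    ContDiff ℝ (⊤ : ℕ∞) (fun t => w x t) := hw.comp (contDiff_const.prodMk contDiff_id)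

lemma pdx_scale (w : ℝ → ℝ → ℝ) (hw : ContDiff ℝ (⊤ : ℕ∞) (Function.uncurry w)) (a b x y : ℝ) :
    pdx (fun x y => b * w (a * x) y) x y = b * (pdx w (a * x) y * a) := by
  have hd : HasDerivAt (fun s => w s y) (pdx w (a * x) y) (a * x) :=
    ((sliceX w hw y).differentiable (by simp) (a * x)).hasDerivAt
  have h2 : HasDerivAt (fun t : ℝ => a * t) (a * 1) x := (hasDerivAt_id x).const_mul a
  have h3 := ((hd.comp x h2).const_mul b).deriv
  rw [show b * (pdx w (a * x) y * a) = b * (pdx w (a * x) y * (a * 1)) by ring]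
  exact h3

lemma pdy_scale (w : ℝ → ℝ → ℝ) (hw : ContDiff ℝ (⊤ : ℕ∞) (Function.uncurry w)) (a b x y : ℝ) :
    pdy (fun x y => b * w (a * x) y) x y = b * pdy w (a * x) y := by
  have hd : HasDerivAt (fun t => w (a * x) t) (pdy w (a * x) y) y :=
    ((sliceY w hw (a * x)).differentiable (by simp) y).hasDerivAt
  exact (hd.const_mul b).deriv

lemma pdy_diff (w : ℝ → ℝ → ℝ) (hw : ContDiff ℝ (⊤ : ℕ∞) (Function.uncurry w)) (x : ℝ) :
    Differentiable ℝ (fun t => pdy w x t) := by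
  have hsd := contDiff_infty_iff_deriv.mp ((sliceY w hw x).of_le (by simp))
  exact hsd.2.differentiable (by simp)

lemma pdyy_scale (w : ℝ → ℝ → ℝ) (hw : ContDiff ℝ (⊤ : ℕ∞) (Function.uncurry w)) (a b x y : ℝ) :
    pdyy (fun x y => b * w (a * x) y) x y = b * pdyy w (a * x) y := by
  have h1 : (fun t => pdy (fun x y => b * w (a * x) y) x t)
      = fun t => b * pdy w (a * x) t := funext fun t => pdy_scale w hw a b x t
  unfold pdyy
  rw [h1, deriv_const_mul _ (pdy_diff w hw (a * x) y)]

/-- The v4-scaling combined with a pressure translation preserves the boundary layer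
system: if (f,g,h) is a solution then so is
(e^{-ε} f(e^{ε}x, y), g(e^{ε}x, y), e^{-2ε} h(e^{ε}x, y) + c) for any constants ε, c. -/
theorem stmt19 (ρ ν : ℝ) (hρ : ρ ≠ 0) (f g h : ℝ → ℝ → ℝ)
    (hf : ContDiff ℝ (⊤ : ℕ∞) (Function.uncurry f)) (hg : ContDiff ℝ (⊤ : ℕ∞) (Function.uncurry g))
    (hh : ContDiff ℝ (⊤ : ℕ∞) (Function.uncurry h))
    (eq1 : ∀ x y, pdx f x y + pdy g x y = 0)
    (eq2 : ∀ x y, f x y * pdx f x y + g x y * pdy f x y =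
      -(1 / ρ) * pdx h x y + ν * pdyy f x y)
    (eq3 : ∀ x y, pdy h x y = 0) (ε c : ℝ) :
    let f₁ : ℝ → ℝ → ℝ := fun x y => Real.exp (-ε) * f (Real.exp ε * x) y
    let g₁ : ℝ → ℝ → ℝ := fun x y => g (Real.exp ε * x) y
    let h₁ : ℝ → ℝ → ℝ := fun x y => Real.exp (-(2 * ε)) * h (Real.exp ε * x) y + c
    (∀ x y, pdx f₁ x y + pdy g₁ x y = 0) ∧
    (∀ x y, f₁ x y * pdx f₁ x y + g₁ x y * pdy f₁ x y =
      -(1 / ρ) * pdx h₁ x y + ν * pdyy f₁ x y) ∧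
    (∀ x y, pdy h₁ x y = 0) := by
  intro f₁ g₁ h₁
  have hg1 : g₁ = fun x y => 1 * g (Real.exp ε * x) y := by funext x y; simp [g₁]
  have key : Real.exp (-ε) * Real.exp ε = 1 := by
    rw [← Real.exp_add]; simp
  have hee : Real.exp (-(2 * ε)) * Real.exp ε = Real.exp (-ε) := by
    rw [← Real.exp_add]; ring_nf
  have h2e : Real.exp (-ε) * Real.exp (-ε) = Real.exp (-(2 * ε)) := by
    rw [← Real.exp_add]; ring_nf
  have hpdxh1 : ∀ x y, pdx h₁ x y
      = Real.exp (-(2 * ε)) * (pdx h (Real.exp ε * x) y * Real.exp ε) := by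
    intro x y
    have hs := pdx_scale h hh (Real.exp ε) (Real.exp (-(2 * ε))) x y
    unfold pdx at hs ⊢
    simp only [h₁]
    rw [deriv_add_const]
    exact hs
  have hpdyh1 : ∀ x y, pdy h₁ x y
      = Real.exp (-(2 * ε)) * pdy h (Real.exp ε * x) y := by
    intro x y
    have hs := pdy_scale h hh (Real.exp ε) (Real.exp (-(2 * ε))) x y
    unfold pdy at hs ⊢
    simp only [h₁]
    rw [deriv_add_const]
    exact hs
  refine ⟨?_, ?_, ?_⟩
  · intro x y
    have h1 := pdx_scale f hf (Real.exp ε) (Real.exp (-ε)) x y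
    have h2 := pdy_scale g hg (Real.exp ε) 1 x y
    simp only [f₁]
    rw [h1, hg1, h2]
    have e1 := eq1 (Real.exp ε * x) y
    linear_combination e1 + pdx f (Real.exp ε * x) y * key
  · intro x y
    have h1 := pdx_scale f hf (Real.exp ε) (Real.exp (-ε)) x y
    have h2 := pdy_scale f hf (Real.exp ε) (Real.exp (-ε)) x y
    have h3 := pdyy_scale f hf (Real.exp ε) (Real.exp (-ε)) x y
    simp only [f₁, g₁]
    rw [h1, h2, h3, hpdxh1 x y]
    have e2 := eq2 (Real.exp ε * x) y
    linear_combination Real.exp (-ε) * e2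
      + (f (Real.exp ε * x) y * pdx f (Real.exp ε * x) y
        + (1 / ρ) * pdx h (Real.exp ε * x) y) * hee
      + f (Real.exp ε * x) y * pdx f (Real.exp ε * x) y * Real.exp ε * h2e
  · intro x y
    rw [hpdyh1 x y, eq3 (Real.exp ε * x) y, mul_zero]
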